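/- arXiv:2601.21999 — 5 statements merged into one kernel-verified Lean document; each statement's English description precedes it below -/
import Mathlib

section
/- (Generalization bound for imbalanced domain generalization, Theorem 2.1.) Let X be a measurable space and Y = {−1, 1}. Let M be a countable set of measurable functions from X × Y to {−1, 1}. Let N ≥ 1, and for each d ∈ {1, …, N} let P_d be a probability measure on X and κ_d a Markov kernel from X to Y (the d-th source domain, with joint distribution P_d ⊗ κ_d); likewise let P_T be a probability measure on X and κ_T a Markov kernel from X to Y (the target domain, with joint distribution P_T ⊗ κ_T). Let π_1, …, π_N ≥ 0 with Σ_d π_d = 1, and let κ̄ be a Markov kernel from X to Y satisfying Σ_d π_d (P_d ⊗ κ_d) = (Σ_d π_d P_d) ⊗ κ̄ (the mixture posterior). Let H be a nonempty set of measurable hypotheses, and let h be a measurable hypothesis with m_h ∈ M and the constant function 1 ∈ M. Define ζ_in := max_{1 ≤ i, j ≤ N} d^{κ_i}_{M△M}(P_i, P_j), η_in := max_{1 ≤ i, j ≤ N} ∫_X D_M(κ_i, κ_j)(x) dP_j(x), ζ_out := d^{κ̄}_{M△M}(Σ_d π_d P_d, P_T), η_out := ∫_X D_M(κ̄, κ_T)(x)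 dP_T(x), and λ_π := inf_{h' ∈ H} ( Σ_d π_d ε_{P_d ⊗ κ_d}(h') + ε_{P_T ⊗ κ_T}(h') ). Then for every ℓ_max ≥ 0 and every δ ∈ ℝ, writing the margin of h as γ_h(x, y) := y · h(x) and Pr[γ_h ≤ δ] := (Σ_d π_d (P_d ⊗ κ_d))({(x, y) : γ_h(x, y) ≤ δ}), one has ε_{P_T ⊗ κ_T}(h) ≤ Σ_d π_d ε_{P_d ⊗ κ_d}(h) + ℓ_max · Pr[γ_h ≤ δ] + ζ_in + η_in + ζ_out + η_out + λ_π. -/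
/-! The error set of `h` is `A(m_h, 1)`, so each risk is `∫ κ(x)(A(m_h, 1)_x) dP(x)` for the
corresponding marginal `P` and posterior `κ`. Passing from the target `(P_T, κ_T)` to the mixture
`(P̄, κ̄)` costs at most `η_out` for the change of posterior (pointwise, then integrated against
`P_T`) and at most `ζ_out` for the change of marginal; the mixture identity turns the resulting
risk under `P̄ ⊗ κ̄` into `∑_d π_d ε_d(h)`. All remaining terms of the bound are nonnegative. -/

open MeasureTheory ProbabilityTheory
open scoped ENNReal NNReal

noncomputable section

namespace IDG

variable {X : Type*} [MeasurableSpace X]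

/-- The risk of a hypothesis `h : X → ℤˣ` (values in `{-1, 1}`) with respect to a joint
distribution `μ` on `X × ℤˣ`: the measure of the error set `{(x, y) | h x ≠ y}`. -/
def risk (μ : Measure (X × ℤˣ)) (h : X → ℤˣ) : ℝ :=
  (μ {z : X × ℤˣ | h z.1 ≠ z.2}).toReal

/-- The symmetric-difference set `A(m, m') = {z | m z ≠ m' z}`. -/
def errSet (m m' : X × ℤˣ → ℤˣ) : Set (X × ℤˣ) := {z | m z ≠ m' z}

/-- The `x`-section of `A(m, m')`. -/
def xsec (m m' : X × ℤˣ → ℤˣ) (x : X) : Set ℤˣ := {y | m (x, y) ≠ m' (x, y)}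

/-- The `M△M`-divergence between two measures on `X × ℤˣ`. -/
def dMM (M : Set (X × ℤˣ → ℤˣ)) (μ ν : Measure (X × ℤˣ)) : ℝ :=
  ⨆ m : M, ⨆ m' : M, |(μ (errSet m.1 m'.1)).toReal - (ν (errSet m.1 m'.1)).toReal|

/-- The `κ`-weighted `M△M`-divergence between two measures on `X`. -/
def dMMker (M : Set (X × ℤˣ → ℤˣ)) (κ : Kernel X ℤˣ) (P Q : Measure X) : ℝ :=
  ⨆ m : M, ⨆ m' : M,
    |(∫ x, (κ x (xsec m.1 m'.1 x)).toReal ∂P) - (∫ x, (κ x (xsec m.1 m'.1 x)).toReal ∂Q)|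

/-- Pointwise posterior discrepancy between two kernels. -/
def DM (M : Set (X × ℤˣ → ℤˣ)) (κ κ' : Kernel X ℤˣ) (x : X) : ℝ :=
  ⨆ m : M, ⨆ m' : M, |(κ x (xsec m.1 m'.1 x)).toReal - (κ' x (xsec m.1 m'.1 x)).toReal|

instance : MeasurableSingletonClass ℤˣ :=
  ⟨fun u => ⟨{(u : ℤ)}, measurableSet_singleton _, by ext; simp [Units.ext_iff]⟩⟩

/-- The map `m_h(x, y) = y · h(x)`. -/
def marginMap (h : X → ℤˣ) : X × ℤˣ → ℤˣ := fun z => z.2 * h z.1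

lemma measurableSet_errSet {m m' : X × ℤˣ → ℤˣ} (hm : Measurable m) (hm' : Measurable m') :
    MeasurableSet (errSet m m') :=
  (measurableSet_eq_fun hm hm').compl

lemma risk_eq_errSet (μ : Measure (X × ℤˣ)) (h : X → ℤˣ) :
    risk μ h = (μ (errSet (marginMap h) 1)).toReal := by
  have hset : errSet (marginMap h) 1 = {z | h z.1 ≠ z.2} := by
    ext ⟨x, y⟩
    simp only [errSet, marginMap, Set.mem_ofPred_eq, Pi.one_apply, ne_eq, mul_eq_one_iff_eq_inv,
      Int.units_inv_eq_self]
    exact ⟨fun hne hxy => hne hxy.symm, fun hne hxy => hne hxy.symm⟩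
  rw [hset, risk]

lemma risk_nonneg (μ : Measure (X × ℤˣ)) (h : X → ℤˣ) : 0 ≤ risk μ h :=
  ENNReal.toReal_nonneg

lemma risk_finset_sum_smul {ι : Type*} (s : Finset ι) (c : ι → ℝ≥0) (μ : ι → Measure (X × ℤˣ))
    [IsFiniteMeasure (∑ i ∈ s, (c i : ℝ≥0∞) • μ i)] (h : X → ℤˣ) :
    risk (∑ i ∈ s, (c i : ℝ≥0∞) • μ i) h = ∑ i ∈ s, (c i : ℝ) * risk (μ i) h := by
  have hfin := measure_ne_top (∑ i ∈ s, (c i : ℝ≥0∞) • μ i) {z | h z.1 ≠ z.2}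
  simp only [risk, Measure.coe_finsetSum, Finset.sum_apply, Measure.smul_apply, smul_eq_mul]
    at hfin ⊢
  rw [ENNReal.toReal_sum (ENNReal.sum_ne_top.1 hfin)]
  simp only [ENNReal.toReal_mul, ENNReal.coe_toReal]

section Kernel

variable (κ : Kernel X ℤˣ) {m m' : X × ℤˣ → ℤˣ}

lemma measurable_kernel_xsec [IsSFiniteKernel κ] (hm : Measurable m) (hm' : Measurable m') :
    Measurable fun x => (κ x (xsec m m' x)).toReal :=
  (Kernel.measurable_kernel_prodMk_left (measurableSet_errSet hm hm')).ennreal_toReal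

lemma kernel_xsec_le_one [IsMarkovKernel κ] (m m' : X × ℤˣ → ℤˣ) (x : X) :
    (κ x (xsec m m' x)).toReal ≤ 1 :=
  measureReal_le_one

lemma integrable_kernel_xsec [IsMarkovKernel κ] (hm : Measurable m) (hm' : Measurable m')
    (μ : Measure X) [IsFiniteMeasure μ] :
    Integrable (fun x => (κ x (xsec m m' x)).toReal) μ :=
  (integrable_const (1 : ℝ)).mono' (measurable_kernel_xsec κ hm hm').aestronglyMeasurable <|
    .of_forall fun x => by
      rw [Real.norm_of_nonneg ENNReal.toReal_nonneg]
      exact kernel_xsec_le_one κ m m' x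

lemma integral_kernel_xsec_le [IsMarkovKernel κ] (hm : Measurable m) (hm' : Measurable m')
    (μ : Measure X) [IsFiniteMeasure μ] :
    ∫ x, (κ x (xsec m m' x)).toReal ∂μ ≤ μ.real Set.univ := by
  simpa using integral_mono (integrable_kernel_xsec κ hm hm' μ) (integrable_const 1)
    (kernel_xsec_le_one κ m m')

lemma compProd_errSet_toReal [IsMarkovKernel κ] (hm : Measurable m) (hm' : Measurable m')
    (μ : Measure X) [SFinite μ] :
    ((μ ⊗ₘ κ) (errSet m m')).toReal = ∫ x, (κ x (xsec m m' x)).toReal ∂μ := by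
  rw [Measure.compProd_apply (measurableSet_errSet hm hm')]
  exact (integral_toReal (Kernel.measurable_kernel_prodMk_left
    (measurableSet_errSet hm hm')).aemeasurable (.of_forall fun _ => measure_lt_top _ _)).symm

end Kernel

section Divergence

variable {M : Set (X × ℤˣ → ℤˣ)} {κ κ' : Kernel X ℤˣ} {m m' : X × ℤˣ → ℤˣ}

lemma DM_nonneg (M : Set (X × ℤˣ → ℤˣ)) (κ κ' : Kernel X ℤˣ) (x : X) : 0 ≤ DM M κ κ' x :=
  Real.iSup_nonneg fun _ => Real.iSup_nonneg fun _ => abs_nonneg _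

lemma dMMker_nonneg (M : Set (X × ℤˣ → ℤˣ)) (κ : Kernel X ℤˣ) (P Q : Measure X) :
    0 ≤ dMMker M κ P Q :=
  Real.iSup_nonneg fun _ => Real.iSup_nonneg fun _ => abs_nonneg _

lemma abs_sub_le_DM [IsMarkovKernel κ] [IsMarkovKernel κ'] (hm : m ∈ M) (hm' : m' ∈ M) (x : X) :
    |(κ x (xsec m m' x)).toReal - (κ' x (xsec m m' x)).toReal| ≤ DM M κ κ' x := by
  refine le_ciSup₂ (f := fun (a b : M) =>
    |(κ x (xsec a.1 b.1 x)).toReal - (κ' x (xsec a.1 b.1 x)).toReal|) ⟨1, ?_⟩ ⟨m, hm⟩ ⟨m', hm'⟩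
  rintro _ ⟨_, ⟨a, rfl⟩, ⟨b, rfl⟩⟩
  exact abs_sub_le_of_nonneg_of_le ENNReal.toReal_nonneg (kernel_xsec_le_one κ _ _ x)
    ENNReal.toReal_nonneg (kernel_xsec_le_one κ' _ _ x)

lemma abs_sub_le_dMMker (hMmeas : ∀ m ∈ M, Measurable m) [IsMarkovKernel κ]
    (P Q : Measure X) [IsFiniteMeasure P] [IsFiniteMeasure Q] (hm : m ∈ M) (hm' : m' ∈ M) :
    |∫ x, (κ x (xsec m m' x)).toReal ∂P - ∫ x, (κ x (xsec m m' x)).toReal ∂Q|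
      ≤ dMMker M κ P Q := by
  refine le_ciSup₂ (f := fun (a b : M) => |∫ x, (κ x (xsec a.1 b.1 x)).toReal ∂P -
    ∫ x, (κ x (xsec a.1 b.1 x)).toReal ∂Q|) ⟨P.real Set.univ + Q.real Set.univ, ?_⟩
    ⟨m, hm⟩ ⟨m', hm'⟩
  rintro _ ⟨_, ⟨a, rfl⟩, ⟨b, rfl⟩⟩
  have ha := hMmeas a a.2
  have hb := hMmeas b b.2
  refine (abs_sub _ _).trans (add_le_add ?_ ?_) <;>
    rw [abs_of_nonneg (integral_nonneg fun _ => ENNReal.toReal_nonneg)] <;>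
    exact integral_kernel_xsec_le κ ha hb _

lemma measurable_DM (hM : M.Countable) (hMmeas : ∀ m ∈ M, Measurable m) [IsSFiniteKernel κ]
    [IsSFiniteKernel κ'] : Measurable (DM M κ κ') := by
  have : Countable M := hM.to_subtype
  exact .iSup fun a => .iSup fun b =>
    ((measurable_kernel_xsec κ (hMmeas a a.2) (hMmeas b b.2)).sub
      (measurable_kernel_xsec κ' (hMmeas a a.2) (hMmeas b b.2))).abs

lemma DM_le_one [IsMarkovKernel κ] [IsMarkovKernel κ'] (x : X) : DM M κ κ' x ≤ 1 :=
  Real.iSup_le (fun _ => Real.iSup_le (fun _ =>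
    abs_sub_le_of_nonneg_of_le ENNReal.toReal_nonneg (kernel_xsec_le_one κ _ _ x)
      ENNReal.toReal_nonneg (kernel_xsec_le_one κ' _ _ x)) zero_le_one) zero_le_one

lemma integrable_DM (hM : M.Countable) (hMmeas : ∀ m ∈ M, Measurable m) [IsMarkovKernel κ]
    [IsMarkovKernel κ'] (Q : Measure X) [IsFiniteMeasure Q] : Integrable (DM M κ κ') Q :=
  (integrable_const (1 : ℝ)).mono' (measurable_DM hM hMmeas).aestronglyMeasurable <|
    .of_forall fun x => by
      rw [Real.norm_of_nonneg (DM_nonneg M κ κ' x)]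
      exact DM_le_one x

theorem integral_kernel_xsec_le_add (hM : M.Countable) (hMmeas : ∀ m ∈ M, Measurable m)
    [IsMarkovKernel κ] [IsMarkovKernel κ'] (P Q : Measure X) [IsFiniteMeasure P]
    [IsFiniteMeasure Q] (hm : m ∈ M) (hm' : m' ∈ M) :
    ∫ x, (κ' x (xsec m m' x)).toReal ∂Q ≤
      ∫ x, (κ x (xsec m m' x)).toReal ∂P + dMMker M κ P Q + ∫ x, DM M κ κ' x ∂Q := by
  have hκ := integrable_kernel_xsec κ (hMmeas m hm) (hMmeas m' hm') Q
  have hκ' := integrable_kernel_xsec κ' (hMmeas m hm) (hMmeas m' hm') Q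
  have posterior_shift : ∫ x, (κ' x (xsec m m' x)).toReal ∂Q ≤
      ∫ x, (κ x (xsec m m' x)).toReal ∂Q + ∫ x, DM M κ κ' x ∂Q := by
    rw [← integral_add hκ (integrable_DM hM hMmeas Q)]
    refine integral_mono hκ' (hκ.add (integrable_DM hM hMmeas Q)) fun x => ?_
    linarith [neg_abs_le ((κ x (xsec m m' x)).toReal - (κ' x (xsec m m' x)).toReal),
      abs_sub_le_DM (κ := κ) (κ' := κ') hm hm' x]
  have marginal_shift := abs_sub_le_dMMker hMmeas (κ := κ) P Q hm hm'
  linarith [neg_abs_le (∫ x, (κ x (xsec m m' x)).toReal ∂P - ∫ x, (κ x (xsec m m' x)).toReal ∂Q)]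

theorem risk_compProd_le (hM : M.Countable) (hMmeas : ∀ m ∈ M, Measurable m)
    [IsMarkovKernel κ] [IsMarkovKernel κ'] (P Q : Measure X) [IsFiniteMeasure P]
    [IsFiniteMeasure Q] {h : X → ℤˣ} (hmh : marginMap h ∈ M) (hone : 1 ∈ M) :
    risk (Q ⊗ₘ κ') h ≤ risk (P ⊗ₘ κ) h + dMMker M κ P Q + ∫ x, DM M κ κ' x ∂Q := by
  have hmh_meas := hMmeas _ hmh
  have hone_meas := hMmeas _ hone
  rw [risk_eq_errSet, risk_eq_errSet, compProd_errSet_toReal κ' hmh_meas hone_meas,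
    compProd_errSet_toReal κ hmh_meas hone_meas]
  exact integral_kernel_xsec_le_add hM hMmeas P Q hmh hone

end Divergence

theorem idg_generalization_bound_general
    {N : ℕ}
    (M : Set (X × ℤˣ → ℤˣ)) (hMcount : M.Countable) (hMmeas : ∀ m ∈ M, Measurable m)
    (P : Fin N → Measure X) (hP : ∀ d, IsProbabilityMeasure (P d))
    (κ : Fin N → Kernel X ℤˣ)
    (PT : Measure X) (hPT : IsProbabilityMeasure PT)
    (κT : Kernel X ℤˣ) (hκT : IsMarkovKernel κT)
    (π : Fin N → ℝ≥0)
    (κbar : Kernel X ℤˣ) (hκbar : IsMarkovKernel κbar)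
    (hmix : (∑ d, (π d : ℝ≥0∞) • (P d ⊗ₘ κ d)) = (∑ d, (π d : ℝ≥0∞) • P d) ⊗ₘ κbar)
    (H : Set (X → ℤˣ))
    (h : X → ℤˣ)
    (hmh : (fun z : X × ℤˣ => z.2 * h z.1) ∈ M)
    (hone : (fun _ : X × ℤˣ => (1 : ℤˣ)) ∈ M)
    (ℓmax : ℝ) (hℓmax : 0 ≤ ℓmax) (δ : ℝ) :
    risk (PT ⊗ₘ κT) h ≤
      (∑ d, (π d : ℝ) * risk (P d ⊗ₘ κ d) h)
      + ℓmax * ((∑ d, (π d : ℝ≥0∞) • (P d ⊗ₘ κ d))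
          {z : X × ℤˣ | (((z.2 * h z.1 : ℤˣ) : ℤ) : ℝ) ≤ δ}).toReal
      + (⨆ i, ⨆ j, dMMker M (κ i) (P i) (P j))
      + (⨆ i, ⨆ j, ∫ x, DM M (κ i) (κ j) x ∂(P j))
      + dMMker M κbar (∑ d, (π d : ℝ≥0∞) • P d) PT
      + (∫ x, DM M κbar κT x ∂PT)
      + (⨅ h' : H, ((∑ d, (π d : ℝ) * risk (P d ⊗ₘ κ d) h'.1) + risk (PT ⊗ₘ κT) h'.1)) := by
  have : ∀ d, IsFiniteMeasure ((π d : ℝ≥0∞) • P d) := fun d =>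
    inferInstanceAs (IsFiniteMeasure (π d • P d))
  have hmixture : risk ((∑ d, (π d : ℝ≥0∞) • P d) ⊗ₘ κbar) h =
      ∑ d, (π d : ℝ) * risk (P d ⊗ₘ κ d) h := by
    have : IsFiniteMeasure (∑ d, (π d : ℝ≥0∞) • (P d ⊗ₘ κ d)) := hmix ▸ inferInstance
    rw [← hmix, risk_finset_sum_smul]
  have hout := risk_compProd_le hMcount hMmeas (κ := κbar) (κ' := κT)
    (∑ d, (π d : ℝ≥0∞) • P d) PT hmh hone
  have hmargin : 0 ≤ ℓmax * ((∑ d, (π d : ℝ≥0∞) • (P d ⊗ₘ κ d))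
      {z : X × ℤˣ | (((z.2 * h z.1 : ℤˣ) : ℤ) : ℝ) ≤ δ}).toReal :=
    mul_nonneg hℓmax ENNReal.toReal_nonneg
  have hζin : 0 ≤ ⨆ i, ⨆ j, dMMker M (κ i) (P i) (P j) :=
    Real.iSup_nonneg fun _ => Real.iSup_nonneg fun _ => dMMker_nonneg M _ _ _
  have hηin : 0 ≤ ⨆ i, ⨆ j, ∫ x, DM M (κ i) (κ j) x ∂(P j) :=
    Real.iSup_nonneg fun _ => Real.iSup_nonneg fun _ => integral_nonneg (DM_nonneg M _ _)
  have hlambda :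
      0 ≤ ⨅ h' : H, ((∑ d, (π d : ℝ) * risk (P d ⊗ₘ κ d) h'.1) + risk (PT ⊗ₘ κT) h'.1) :=
    Real.iInf_nonneg fun _ => add_nonneg
      (Finset.sum_nonneg fun d _ => mul_nonneg (π d).coe_nonneg (risk_nonneg _ _))
      (risk_nonneg _ _)
  linarith

/-- **Generalization bound for imbalanced domain generalization (Theorem 2.1).** -/
theorem idg_generalization_bound
    {N : ℕ} (hN : 1 ≤ N)
    (M : Set (X × ℤˣ → ℤˣ)) (hMcount : M.Countable) (hMmeas : ∀ m ∈ M, Measurable m)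
    (P : Fin N → Measure X) (hP : ∀ d, IsProbabilityMeasure (P d))
    (κ : Fin N → Kernel X ℤˣ) (hκ : ∀ d, IsMarkovKernel (κ d))
    (PT : Measure X) (hPT : IsProbabilityMeasure PT)
    (κT : Kernel X ℤˣ) (hκT : IsMarkovKernel κT)
    (π : Fin N → ℝ≥0) (hπ : ∑ d, π d = 1)
    (κbar : Kernel X ℤˣ) (hκbar : IsMarkovKernel κbar)
    (hmix : (∑ d, (π d : ℝ≥0∞) • (P d ⊗ₘ κ d)) = (∑ d, (π d : ℝ≥0∞) • P d) ⊗ₘ κbar)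
    (H : Set (X → ℤˣ)) (hH : H.Nonempty) (hHmeas : ∀ h' ∈ H, Measurable h')
    (h : X → ℤˣ) (hmeas : Measurable h)
    (hmh : (fun z : X × ℤˣ => z.2 * h z.1) ∈ M)
    (hone : (fun _ : X × ℤˣ => (1 : ℤˣ)) ∈ M)
    (ℓmax : ℝ) (hℓmax : 0 ≤ ℓmax) (δ : ℝ) :
    risk (PT ⊗ₘ κT) h ≤
      (∑ d, (π d : ℝ) * risk (P d ⊗ₘ κ d) h)
      + ℓmax * ((∑ d, (π d : ℝ≥0∞) • (P d ⊗ₘ κ d))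
          {z : X × ℤˣ | (((z.2 * h z.1 : ℤˣ) : ℤ) : ℝ) ≤ δ}).toReal
      + (⨆ i, ⨆ j, dMMker M (κ i) (P i) (P j))
      + (⨆ i, ⨆ j, ∫ x, DM M (κ i) (κ j) x ∂(P j))
      + dMMker M κbar (∑ d, (π d : ℝ≥0∞) • P d) PT
      + (∫ x, DM M κbar κT x ∂PT)
      + (⨅ h' : H, ((∑ d, (π d : ℝ) * risk (P d ⊗ₘ κ d) h'.1) + risk (PT ⊗ₘ κT) h'.1)) :=
  idg_generalization_bound_general M hMcount hMmeas P hP κ PT hPT κT hκT π κbar hκbar hmix H h hmh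
    hone ℓmax hℓmax δ

end IDG
end
end

section
/- (Reduction to the classical bound when posteriors coincide.) Let X be a measurable space and Y = {−1, 1}. Let M be a countable set of measurable functions from X × Y to {−1, 1}. Let P_S and P_T be probability measures on X and let κ be a Markov kernel from X to Y shared by source and target, so that the source joint distribution is P_S ⊗ κ and the target joint distribution is P_T ⊗ κ. Let H be a nonempty set of measurable hypotheses and set λ_H := inf_{h' ∈ H} ( ε_{P_S ⊗ κ}(h') + ε_{P_T ⊗ κ}(h') ). Then for every measurable hypothesis h with m_h ∈ M and the constant function 1 ∈ M, ε_{P_T ⊗ κ}(h) ≤ ε_{P_S ⊗ κ}(h) + d^{κ}_{M△M}(P_S, P_T) + λ_H; in particular, when source and target posterior kernels coincide, the posterior-discrepancy term vanishes and the bound reduces to a prior-alignment bound in which the prior divergence is measured under the common posterior. -/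
/-!
The error event `{h x ≠ y}` is exactly the disagreement set `A(m_h, 1)`, so disintegrating
`P ⊗ κ` expresses each risk as `∫ κ(x)(A(m_h, 1)_x) dP(x)`. The gap between target and source
risk is then one of the terms in the supremum defining `d^κ_{M△M}(P_S, P_T)`, and `λ_H ≥ 0`.
-/

open MeasureTheory ProbabilityTheory
open scoped ENNReal NNReal

noncomputable section

namespace IDG

variable {X : Type*} [MeasurableSpace X]

instance _root_.Units.instDiscreteMeasurableSpace {M : Type*} [Monoid M] [MeasurableSpace M]
    [DiscreteMeasurableSpace M] : DiscreteMeasurableSpace Mˣ where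
  forall_measurableSet s :=
    ⟨Units.val '' s, .of_discrete, Set.preimage_image_eq _ Units.val_injective⟩

lemma errSet_margin_one {α : Type*} (h : α → ℤˣ) :
    errSet (fun z : α × ℤˣ => z.2 * h z.1) (fun _ => 1) = {z | h z.1 ≠ z.2} := by
  ext ⟨x, y⟩
  have key : ∀ u v : ℤˣ, v * u ≠ 1 ↔ u ≠ v := by decide
  exact key (h x) y

lemma measureReal_compProd_eq_integral {α β : Type*} [MeasurableSpace α] [MeasurableSpace β]
    (μ : Measure α) [SFinite μ] (κ : Kernel α β) [IsFiniteKernel κ] {s : Set (α × β)}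
    (hs : MeasurableSet s) :
    ((μ ⊗ₘ κ) s).toReal = ∫ a, (κ a (Prod.mk a ⁻¹' s)).toReal ∂μ := by
  rw [Measure.compProd_apply hs, integral_toReal
    (Kernel.measurable_kernel_prodMk_left hs).aemeasurable
    (.of_forall fun a => measure_lt_top _ _)]

lemma risk_compProd_eq_integral (P : Measure X) [SFinite P] (κ : Kernel X ℤˣ) [IsFiniteKernel κ]
    {h : X → ℤˣ} (hh : Measurable h) :
    risk (P ⊗ₘ κ) h
      = ∫ x, (κ x (xsec (fun z : X × ℤˣ => z.2 * h z.1) (fun _ => 1) x)).toReal ∂P := by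
  rw [risk, ← errSet_margin_one]
  exact measureReal_compProd_eq_integral P κ (measurableSet_errSet (by fun_prop) measurable_const)

section KernelIntegral

variable {Y : Type*} [MeasurableSpace Y] (κ : Kernel X Y) [IsMarkovKernel κ] (s : X → Set Y)

lemma integral_kernel_toReal_le_one (P : Measure X) [IsProbabilityMeasure P] :
    ∫ x, (κ x (s x)).toReal ∂P ≤ 1 :=
  (integral_mono_of_nonneg (.of_forall fun _ => ENNReal.toReal_nonneg) (integrable_const 1)
    (.of_forall fun x => ENNReal.toReal_le_of_le_ofReal zero_le_one
      (by simpa using prob_le_one))).trans_eq (by simp)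

lemma abs_integral_kernel_toReal_sub_le_one (P Q : Measure X) [IsProbabilityMeasure P]
    [IsProbabilityMeasure Q] :
    |(∫ x, (κ x (s x)).toReal ∂P) - ∫ x, (κ x (s x)).toReal ∂Q| ≤ 1 :=
  abs_sub_le_of_nonneg_of_le (integral_nonneg fun _ => ENNReal.toReal_nonneg)
    (integral_kernel_toReal_le_one κ s P) (integral_nonneg fun _ => ENNReal.toReal_nonneg)
    (integral_kernel_toReal_le_one κ s Q)

end KernelIntegral

lemma le_ciSup_ciSup_of_forall_le {ι ι' : Type*} {f : ι → ι' → ℝ} {C : ℝ}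
    (hf : ∀ i j, f i j ≤ C) (i : ι) (j : ι') : f i j ≤ ⨆ i, ⨆ j, f i j :=
  haveI : Nonempty ι' := ⟨j⟩
  (le_ciSup ⟨C, Set.forall_mem_range.2 (hf i)⟩ j).trans
    (le_ciSup ⟨C, Set.forall_mem_range.2 fun i => ciSup_le (hf i)⟩ i)

lemma le_dMMker {M : Set (X × ℤˣ → ℤˣ)} (κ : Kernel X ℤˣ) [IsMarkovKernel κ]
    (P Q : Measure X) [IsProbabilityMeasure P] [IsProbabilityMeasure Q]
    {m m' : X × ℤˣ → ℤˣ} (hm : m ∈ M) (hm' : m' ∈ M) :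
    |(∫ x, (κ x (xsec m m' x)).toReal ∂P) - ∫ x, (κ x (xsec m m' x)).toReal ∂Q|
      ≤ dMMker M κ P Q :=
  le_ciSup_ciSup_of_forall_le
    (fun n n' : M => abs_integral_kernel_toReal_sub_le_one κ (xsec n.1 n'.1) P Q) ⟨m, hm⟩ ⟨m', hm'⟩

theorem generalization_bound_shared_posterior_general
    (M : Set (X × ℤˣ → ℤˣ))
    (PS PT : Measure X) (hPS : IsProbabilityMeasure PS) (hPT : IsProbabilityMeasure PT)
    (κ : Kernel X ℤˣ) (hκ : IsMarkovKernel κ)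
    (H : Set (X → ℤˣ))
    (h : X → ℤˣ) (hmeas : Measurable h)
    (hmh : (fun z : X × ℤˣ => z.2 * h z.1) ∈ M)
    (hone : (fun _ : X × ℤˣ => (1 : ℤˣ)) ∈ M) :
    risk (PT ⊗ₘ κ) h ≤
      risk (PS ⊗ₘ κ) h
      + dMMker M κ PS PT
      + (⨅ h' : H, (risk (PS ⊗ₘ κ) h'.1 + risk (PT ⊗ₘ κ) h'.1)) := by
  calc risk (PT ⊗ₘ κ) h
      ≤ risk (PS ⊗ₘ κ) h + |risk (PS ⊗ₘ κ) h - risk (PT ⊗ₘ κ) h| := by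
        linarith [neg_abs_le (risk (PS ⊗ₘ κ) h - risk (PT ⊗ₘ κ) h)]
    _ ≤ risk (PS ⊗ₘ κ) h + dMMker M κ PS PT := by
        rw [risk_compProd_eq_integral PS κ hmeas, risk_compProd_eq_integral PT κ hmeas]
        gcongr
        exact le_dMMker κ PS PT hmh hone
    _ ≤ _ := le_add_of_nonneg_right <|
        Real.iInf_nonneg fun _ => add_nonneg ENNReal.toReal_nonneg ENNReal.toReal_nonneg

/-- **Reduction to the classical bound when source and target posteriors coincide.**
With a common posterior kernel `κ`, the posterior-discrepancy term vanishes and the bound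
reduces to a prior-alignment bound measured under the common posterior. -/
theorem generalization_bound_shared_posterior
    (M : Set (X × ℤˣ → ℤˣ)) (hMcount : M.Countable) (hMmeas : ∀ m ∈ M, Measurable m)
    (PS PT : Measure X) (hPS : IsProbabilityMeasure PS) (hPT : IsProbabilityMeasure PT)
    (κ : Kernel X ℤˣ) (hκ : IsMarkovKernel κ)
    (H : Set (X → ℤˣ)) (hH : H.Nonempty) (hHmeas : ∀ h' ∈ H, Measurable h')
    (h : X → ℤˣ) (hmeas : Measurable h)
    (hmh : (fun z : X × ℤˣ => z.2 * h z.1) ∈ M)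
    (hone : (fun _ : X × ℤˣ => (1 : ℤˣ)) ∈ M) :
    risk (PT ⊗ₘ κ) h ≤
      risk (PS ⊗ₘ κ) h
      + dMMker M κ PS PT
      + (⨅ h' : H, (risk (PS ⊗ₘ κ) h'.1 + risk (PT ⊗ₘ κ) h'.1)) :=
  generalization_bound_shared_posterior_general M PS PT hPS hPT κ hκ H h hmeas hmh hone

end IDG
end
end

section
/- (Lemma A.1: decomposition of the joint-distribution M△M-divergence into prior and posterior terms.) Let X be a measurable space and Y = {−1, 1}. Let M be a countable set of measurable functions from X × Y to {−1, 1}. Let P_S and P_T be probability measures on X and let κ_S and κ_T be Markov kernels from X to Y. Then d_{M△M}(P_S ⊗ κ_S, P_T ⊗ κ_T) ≤ d^{κ_S}_{M△M}(P_S, P_T) + ∫_X D_M(κ_S, κ_T)(x) dP_T(x). -/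
open MeasureTheory ProbabilityTheory
open scoped ENNReal NNReal

noncomputable section

namespace IDG

variable {X : Type*} [MeasurableSpace X]

instance inst_s4 : MeasurableSingletonClass ℤˣ := ⟨fun u => by
  have h : ({u} : Set ℤˣ) = ((↑) : ℤˣ → ℤ) ⁻¹' {(u : ℤ)} := by
    ext v; simp [Units.ext_iff]
  rw [h]; exact Measurable.of_comap_le le_rfl (measurableSet_singleton _)⟩

omit [MeasurableSpace X] in
lemma xsec_eq' (m m' : X × ℤˣ → ℤˣ) (x : X) :
    xsec m m' x = Prod.mk x ⁻¹' errSet m m' := rfl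

lemma toReal_le_one' (κ : Kernel X ℤˣ) [IsMarkovKernel κ] (x : X) (s : Set ℤˣ) :
    (κ x s).toReal ≤ 1 := by
  have h1 : κ x s ≤ 1 := prob_le_one
  calc (κ x s).toReal ≤ (1 : ℝ≥0∞).toReal := ENNReal.toReal_mono ENNReal.one_ne_top h1
  _ = 1 := by simp

lemma meas_kern {m m' : X × ℤˣ → ℤˣ} (hm : Measurable m) (hm' : Measurable m')
    (κ : Kernel X ℤˣ) [IsMarkovKernel κ] :
    Measurable fun x => (κ x (xsec m m' x)).toReal := by
  simp only [xsec_eq']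
  exact (Kernel.measurable_kernel_prodMk_left (measurableSet_errSet hm hm')).ennreal_toReal

lemma integ_kern {m m' : X × ℤˣ → ℤˣ} (hm : Measurable m) (hm' : Measurable m')
    (κ : Kernel X ℤˣ) [IsMarkovKernel κ] (P : Measure X) [IsProbabilityMeasure P] :
    Integrable (fun x => (κ x (xsec m m' x)).toReal) P := by
  refine (integrable_const (1 : ℝ)).mono' (meas_kern hm hm' κ).aestronglyMeasurable ?_
  filter_upwards with x
  rw [Real.norm_eq_abs, abs_of_nonneg ENNReal.toReal_nonneg]
  exact toReal_le_one' κ x _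

lemma compProd_toReal {m m' : X × ℤˣ → ℤˣ} (hm : Measurable m) (hm' : Measurable m')
    (κ : Kernel X ℤˣ) [IsMarkovKernel κ] (P : Measure X) [IsProbabilityMeasure P] :
    ((P ⊗ₘ κ) (errSet m m')).toReal = ∫ x, (κ x (xsec m m' x)).toReal ∂P := by
  rw [Measure.compProd_apply (measurableSet_errSet hm hm')]
  rw [integral_toReal]
  · rfl
  · exact (Kernel.measurable_kernel_prodMk_left (measurableSet_errSet hm hm')).aemeasurable
  · filter_upwards with x
    exact lt_of_le_of_lt prob_le_one (by norm_num)

lemma le_iSup2 {ι : Sort*} (f : ι → ι → ℝ) (C : ℝ) (hC : ∀ i j, f i j ≤ C) (i j : ι) :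
    f i j ≤ ⨆ i, ⨆ j, f i j := by
  have : Nonempty ι := ⟨i⟩
  have h1 : f i j ≤ ⨆ j, f i j :=
    le_ciSup ⟨C, by rintro _ ⟨j', rfl⟩; exact hC i j'⟩ j
  exact h1.trans (le_ciSup ⟨C, by rintro _ ⟨i', rfl⟩; exact ciSup_le (hC i')⟩ i)

lemma integral_kern_le_one {m m' : X × ℤˣ → ℤˣ} (hm : Measurable m) (hm' : Measurable m')
    (κ : Kernel X ℤˣ) [IsMarkovKernel κ] (P : Measure X) [IsProbabilityMeasure P] :
    ∫ x, (κ x (xsec m m' x)).toReal ∂P ≤ 1 := by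
  calc ∫ x, (κ x (xsec m m' x)).toReal ∂P ≤ ∫ _x, (1 : ℝ) ∂P :=
        integral_mono (integ_kern hm hm' κ P) (integrable_const 1) fun x => toReal_le_one' κ x _
  _ = 1 := by simp

/-- **Lemma A.1: decomposition of the joint `M△M`-divergence into prior and posterior terms.** -/
theorem dMM_compProd_le
    (M : Set (X × ℤˣ → ℤˣ)) (hMcount : M.Countable) (hMmeas : ∀ m ∈ M, Measurable m)
    (PS PT : Measure X) (hPS : IsProbabilityMeasure PS) (hPT : IsProbabilityMeasure PT)
    (κS κT : Kernel X ℤˣ) (hκS : IsMarkovKernel κS) (hκT : IsMarkovKernel κT) :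
    dMM M (PS ⊗ₘ κS) (PT ⊗ₘ κT) ≤
      dMMker M κS PS PT + (∫ x, DM M κS κT x ∂PT) := by
  haveI := hPS; haveI := hPT; haveI := hκS; haveI := hκT
  haveI := hMcount.to_subtype
  -- pointwise bounds
  have habs1 : ∀ (κ κ' : Kernel X ℤˣ) (_ : IsMarkovKernel κ) (_ : IsMarkovKernel κ')
      (x : X) (m m' : M),
      |(κ x (xsec m.1 m'.1 x)).toReal - (κ' x (xsec m.1 m'.1 x)).toReal| ≤ 1 := by
    intro κ κ' h h' x m m'
    have a1 := toReal_le_one' κ x (xsec m.1 m'.1 x)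
    have a2 := toReal_le_one' κ' x (xsec m.1 m'.1 x)
    have b1 : (0:ℝ) ≤ (κ x (xsec m.1 m'.1 x)).toReal := ENNReal.toReal_nonneg
    have b2 : (0:ℝ) ≤ (κ' x (xsec m.1 m'.1 x)).toReal := ENNReal.toReal_nonneg
    rw [abs_sub_le_iff]; constructor <;> linarith
  -- nonnegativity and a bound for DM
  have hDMnonneg : ∀ x, 0 ≤ DM M κS κT x := fun x =>
    Real.iSup_nonneg fun m => Real.iSup_nonneg fun m' => abs_nonneg _
  have hDMle : ∀ x, DM M κS κT x ≤ 1 := fun x =>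
    Real.iSup_le (fun m => Real.iSup_le (fun m' => habs1 κS κT hκS hκT x m m') zero_le_one)
      zero_le_one
  have hDMmeas : Measurable (DM M κS κT) := by
    apply Measurable.iSup; intro m
    apply Measurable.iSup; intro m'
    exact ((meas_kern (hMmeas _ m.2) (hMmeas _ m'.2) κS).sub
      (meas_kern (hMmeas _ m.2) (hMmeas _ m'.2) κT)).abs
  have hDMint : Integrable (DM M κS κT) PT := by
    refine (integrable_const (1 : ℝ)).mono' hDMmeas.aestronglyMeasurable ?_
    filter_upwards with x
    rw [Real.norm_eq_abs, abs_of_nonneg (hDMnonneg x)]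
    exact hDMle x
  have hRHS : 0 ≤ dMMker M κS PS PT + ∫ x, DM M κS κT x ∂PT := by
    refine add_nonneg (Real.iSup_nonneg fun m => Real.iSup_nonneg fun m' => abs_nonneg _) ?_
    exact integral_nonneg hDMnonneg
  refine Real.iSup_le (fun m => Real.iSup_le (fun m' => ?_) hRHS) hRHS
  have hm := hMmeas _ m.2
  have hm' := hMmeas _ m'.2
  rw [compProd_toReal hm hm' κS PS, compProd_toReal hm hm' κT PT]
  set a := ∫ x, (κS x (xsec m.1 m'.1 x)).toReal ∂PS with ha
  set b := ∫ x, (κS x (xsec m.1 m'.1 x)).toReal ∂PT with hb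
  set c := ∫ x, (κT x (xsec m.1 m'.1 x)).toReal ∂PT with hc
  have h1 : |a - b| ≤ dMMker M κS PS PT := by
    refine le_iSup2
      (fun (m : M) (m' : M) => |(∫ x, (κS x (xsec m.1 m'.1 x)).toReal ∂PS)
        - (∫ x, (κS x (xsec m.1 m'.1 x)).toReal ∂PT)|) 2 ?_ m m'
    intro i j
    have p1 := integral_kern_le_one (hMmeas _ i.2) (hMmeas _ j.2) κS PS
    have p2 := integral_kern_le_one (hMmeas _ i.2) (hMmeas _ j.2) κS PT
    have q1 : (0:ℝ) ≤ ∫ x, (κS x (xsec i.1 j.1 x)).toReal ∂PS :=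
      integral_nonneg fun x => ENNReal.toReal_nonneg
    have q2 : (0:ℝ) ≤ ∫ x, (κS x (xsec i.1 j.1 x)).toReal ∂PT :=
      integral_nonneg fun x => ENNReal.toReal_nonneg
    rw [abs_sub_le_iff]; constructor <;> linarith
  have h2 : |b - c| ≤ ∫ x, DM M κS κT x ∂PT := by
    rw [hb, hc, ← integral_sub (integ_kern hm hm' κS PT) (integ_kern hm hm' κT PT)]
    calc |∫ x, ((κS x (xsec m.1 m'.1 x)).toReal - (κT x (xsec m.1 m'.1 x)).toReal) ∂PT|
        ≤ ∫ x, |(κS x (xsec m.1 m'.1 x)).toReal - (κT x (xsec m.1 m'.1 x)).toReal| ∂PT :=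
          by simpa [Real.norm_eq_abs] using
            norm_integral_le_integral_norm (μ := PT)
              (fun x => (κS x (xsec m.1 m'.1 x)).toReal - (κT x (xsec m.1 m'.1 x)).toReal)
      _ ≤ ∫ x, DM M κS κT x ∂PT := by
          refine integral_mono
            (((integ_kern hm hm' κS PT).sub (integ_kern hm hm' κT PT)).abs) hDMint ?_
          intro x
          exact le_iSup2
            (fun (i : M) (j : M) =>
              |(κS x (xsec i.1 j.1 x)).toReal - (κT x (xsec i.1 j.1 x)).toReal|) 1
            (fun i j => habs1 κS κT hκS hκT x i j) m m'
  calc |a - c| ≤ |a - b| + |b - c| := abs_sub_le a b c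
  _ ≤ dMMker M κS PS PT + ∫ x, DM M κS κT x ∂PT := add_le_add h1 h2

end IDG
end
end

section
/- (Multi-source risk bound through a mixture of the source joint distributions.) Let X be a measurable space and Y = {−1, 1}. Let M be a set of measurable functions from X × Y to {−1, 1}. Let μ_1, …, μ_N and ν be probability measures on X × Y, let π_1, …, π_N ≥ 0 with Σ_i π_i = 1, and set μ̄ := Σ_i π_i μ_i. Let H be a nonempty set of measurable hypotheses and set λ_π := inf_{h' ∈ H} ( Σ_i π_i ε_{μ_i}(h') + ε_ν(h') ). Then for every measurable hypothesis h with m_h ∈ M and the constant function 1 ∈ M, ε_ν(h) ≤ Σ_i π_i ε_{μ_i}(h) + Σ_i π_i d_{M△M}(μ_i, μ̄) + d_{M△M}(μ̄, ν) + λ_π. -/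
open MeasureTheory ProbabilityTheory
open scoped ENNReal NNReal

noncomputable section

namespace IDG

variable {X : Type*} [MeasurableSpace X]

/-- **Multi-source risk bound through a mixture of the source joint distributions.** -/
theorem multisource_risk_bound_via_mixture
    (M : Set (X × ℤˣ → ℤˣ))
    {N : ℕ} (μ : Fin N → Measure (X × ℤˣ)) (hμ : ∀ i, IsProbabilityMeasure (μ i))
    (ν : Measure (X × ℤˣ)) (hν : IsProbabilityMeasure ν)
    (π : Fin N → ℝ≥0) (hπ : ∑ i, π i = 1)
    (H : Set (X → ℤˣ)) (hH : H.Nonempty) (hHmeas : ∀ h' ∈ H, Measurable h')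
    (h : X → ℤˣ) (hmeas : Measurable h)
    (hmh : (fun z : X × ℤˣ => z.2 * h z.1) ∈ M)
    (hone : (fun _ : X × ℤˣ => (1 : ℤˣ)) ∈ M) :
    risk ν h ≤
      (∑ i, (π i : ℝ) * risk (μ i) h)
      + (∑ i, (π i : ℝ) * dMM M (μ i) (∑ j, (π j : ℝ≥0∞) • μ j))
      + dMM M (∑ j, (π j : ℝ≥0∞) • μ j) ν
      + (⨅ h' : H, ((∑ i, (π i : ℝ) * risk (μ i) h'.1) + risk ν h'.1)) := by
  classical
  set μbar : Measure (X × ℤˣ) := ∑ j, (π j : ℝ≥0∞) • μ j with hμbar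
  have hμbar_prob : IsProbabilityMeasure μbar := by
    constructor
    have : μbar Set.univ = ∑ j, (π j : ℝ≥0∞) * μ j Set.univ := by
      simp [hμbar, Measure.finset_sum_apply, Measure.smul_apply, smul_eq_mul]
    rw [this]
    simp only [measure_univ, mul_one]
    rw [← ENNReal.coe_finset_sum, hπ]; simp
  -- error set equals errSet m_h 1
  have hset : errSet (fun z : X × ℤˣ => z.2 * h z.1) (fun _ : X × ℤˣ => (1 : ℤˣ))
      = {z : X × ℤˣ | h z.1 ≠ z.2} := by
    ext z
    have : z.2 * h z.1 ≠ 1 ↔ h z.1 ≠ z.2 := by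
      rcases Int.units_eq_one_or z.2 with h2 | h2 <;>
        rcases Int.units_eq_one_or (h z.1) with h1 | h1 <;> rw [h1, h2] <;> decide
    simpa [errSet] using this
  -- toReal probability bounds
  have htr : ∀ (ρ : Measure (X × ℤˣ)), IsProbabilityMeasure ρ → ∀ T : Set (X × ℤˣ),
      (ρ T).toReal ≤ 1 := by
    intro ρ hρ T
    have h1 : ρ T ≤ 1 := prob_le_one
    simpa using ENNReal.toReal_mono (by simp) h1
  have hb : ∀ (ρ σ : Measure (X × ℤˣ)), IsProbabilityMeasure ρ → IsProbabilityMeasure σ →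
      ∀ T : Set (X × ℤˣ), |(ρ T).toReal - (σ T).toReal| ≤ 2 := by
    intro ρ σ hρ hσ T
    have h1 := htr ρ hρ T
    have h2 := htr σ hσ T
    have h3 : (0:ℝ) ≤ (ρ T).toReal := ENNReal.toReal_nonneg
    have h4 : (0:ℝ) ≤ (σ T).toReal := ENNReal.toReal_nonneg
    rw [abs_le]; constructor <;> linarith
  -- individual term ≤ dMM
  have hle : ∀ (ρ σ : Measure (X × ℤˣ)), IsProbabilityMeasure ρ → IsProbabilityMeasure σ →
      ∀ m0 ∈ M, ∀ m0' ∈ M,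
      |(ρ (errSet m0 m0')).toReal - (σ (errSet m0 m0')).toReal| ≤ dMM M ρ σ := by
    intro ρ σ hρ hσ m0 hm0 m0' hm0'
    have hinner : ∀ m : M,
        |(ρ (errSet m.1 m0')).toReal - (σ (errSet m.1 m0')).toReal|
        ≤ ⨆ m' : M, |(ρ (errSet m.1 m'.1)).toReal - (σ (errSet m.1 m'.1)).toReal| := by
      intro m
      exact le_ciSup
        (f := fun m' : M => |(ρ (errSet m.1 m'.1)).toReal - (σ (errSet m.1 m'.1)).toReal|)
        ⟨2, by rintro _ ⟨m', rfl⟩; exact hb ρ σ hρ hσ _⟩ ⟨m0', hm0'⟩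
    have houter : (⨆ m' : M,
        |(ρ (errSet m0 m'.1)).toReal - (σ (errSet m0 m'.1)).toReal|) ≤ dMM M ρ σ := by
      refine le_ciSup
        (f := fun m : M => ⨆ m' : M,
          |(ρ (errSet m.1 m'.1)).toReal - (σ (errSet m.1 m'.1)).toReal|) ⟨2, ?_⟩ ⟨m0, hm0⟩
      rintro _ ⟨m, rfl⟩
      exact Real.iSup_le (fun m' => hb ρ σ hρ hσ _) (by norm_num)
    exact le_trans (hinner ⟨m0, hm0⟩) houter
  -- dMM nonneg
  have hdMM_nonneg : ∀ (ρ σ : Measure (X × ℤˣ)), 0 ≤ dMM M ρ σ := by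
    intro ρ σ
    exact Real.iSup_nonneg fun m => Real.iSup_nonneg fun m' => abs_nonneg _
  -- risk μbar = ∑ π i * risk (μ i)
  have hμbar_apply : ∀ T : Set (X × ℤˣ),
      (μbar T).toReal = ∑ i, (π i : ℝ) * (μ i T).toReal := by
    intro T
    have h1 : μbar T = ∑ i, (π i : ℝ≥0∞) * μ i T := by
      simp [hμbar, Measure.finset_sum_apply, Measure.smul_apply, smul_eq_mul]
    rw [h1, ENNReal.toReal_sum]
    · refine Finset.sum_congr rfl fun i _ => ?_
      rw [ENNReal.toReal_mul, ENNReal.coe_toReal]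
    · intro i _
      exact ENNReal.mul_ne_top ENNReal.coe_ne_top (by haveI := hμ i; exact (measure_ne_top _ _))
  have hrisk_mix : risk μbar h = ∑ i, (π i : ℝ) * risk (μ i) h := hμbar_apply _
  -- key step
  have hkey : risk ν h ≤ risk μbar h + dMM M μbar ν := by
    have h1 := hle μbar ν hμbar_prob hν _ hmh _ hone
    rw [hset] at h1
    have h2 : (ν {z : X × ℤˣ | h z.1 ≠ z.2}).toReal
        - (μbar {z : X × ℤˣ | h z.1 ≠ z.2}).toReal ≤ dMM M μbar ν := by
      calc _ ≤ |(μbar {z : X × ℤˣ | h z.1 ≠ z.2}).toReal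
          - (ν {z : X × ℤˣ | h z.1 ≠ z.2}).toReal| := by
            rw [abs_sub_comm]; exact le_abs_self _
        _ ≤ _ := h1
    unfold risk
    linarith
  -- nonnegativity of the remaining terms
  have hmid : 0 ≤ ∑ i, (π i : ℝ) * dMM M (μ i) μbar :=
    Finset.sum_nonneg fun i _ => mul_nonneg (π i).coe_nonneg (hdMM_nonneg _ _)
  have hlam : 0 ≤ ⨅ h' : H, ((∑ i, (π i : ℝ) * risk (μ i) h'.1) + risk ν h'.1) := by
    refine Real.iInf_nonneg fun h' => ?_
    have : 0 ≤ ∑ i, (π i : ℝ) * risk (μ i) h'.1 :=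
      Finset.sum_nonneg fun i _ => mul_nonneg (π i).coe_nonneg ENNReal.toReal_nonneg
    have h2 : (0:ℝ) ≤ risk ν h'.1 := ENNReal.toReal_nonneg
    linarith
  rw [← hμbar] at *
  linarith [hkey, hrisk_mix]

end IDG
end
end

section
/- (Gradient of the negative-dominant InfoNCE objective.) Let E be a real inner product space, let P and N be disjoint finite index sets with N nonempty, and set A := P ∪ N. For each a ∈ A let s_a : E → ℝ be a function differentiable at a point p ∈ E, with gradient ∇s_a(p). Assume Σ_{n ∈ N} (1 − s_n(p)) > 0 and Z' := Σ_{a ∈ A} (1 − s_a(p)) > 0. Define L : E → ℝ by L(q) := − log( (1/|N|) · ( Σ_{n ∈ N} (1 − s_n(q)) ) / ( Σ_{a ∈ A} (1 − s_a(q)) ) ). Then L is differentiable at p and its gradient is ∇L(p) = (1/Z') · ( − Σ_{p' ∈ P} ∇s_{p'}(p) + ( Σ_{p' ∈ P} (1 − s_{p'}(p)) / Σ_{n ∈ N} (1 − s_n(p)) ) · Σ_{n ∈ N} ∇s_n(p) ). -/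
/-! Near `p` both sums of dissimilarities stay nonzero, so the objective is
`-log (S_N / |N|) + log S_A` there and its gradient is the difference of logarithmic derivatives
`∇S_A / S_A - ∇S_N / S_N`. As `S_A = S_P + S_N` and `∇S_A = ∇S_P + ∇S_N`, the negative gradients
`-∇S_N` collect the coefficient `1 / S_N - 1 / S_A = S_P / (S_N S_A)`: the amplification factor. -/

open Finset

namespace HasGradientAt

variable {E : Type*} [NormedAddCommGroup E] [InnerProductSpace ℝ E] [CompleteSpace E]
  {u v : E → ℝ} {u' v' x : E}

theorem neg (hu : HasGradientAt u u' x) : HasGradientAt (fun y => -u y) (-u') x := by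
  rw [hasGradientAt_iff_hasFDerivAt, map_neg]
  exact hu.hasFDerivAt.neg

theorem sub (hu : HasGradientAt u u' x) (hv : HasGradientAt v v' x) :
    HasGradientAt (fun y => u y - v y) (u' - v') x := by
  rw [hasGradientAt_iff_hasFDerivAt, map_sub]
  exact hu.hasFDerivAt.sub hv.hasFDerivAt

theorem const_sub (c : ℝ) (hu : HasGradientAt u u' x) :
    HasGradientAt (fun y => c - u y) (-u') x := by
  rw [hasGradientAt_iff_hasFDerivAt, map_neg]
  exact hu.hasFDerivAt.const_sub c

theorem const_mul (c : ℝ) (hu : HasGradientAt u u' x) :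
    HasGradientAt (fun y => c * u y) (c • u') x := by
  rw [hasGradientAt_iff_hasFDerivAt, map_smul]
  exact hu.hasFDerivAt.const_mul c

theorem fun_sum {ι : Type*} {t : Finset ι} {w : ι → E → ℝ} {w' : ι → E}
    (hw : ∀ i ∈ t, HasGradientAt (w i) (w' i) x) :
    HasGradientAt (fun y => ∑ i ∈ t, w i y) (∑ i ∈ t, w' i) x := by
  rw [hasGradientAt_iff_hasFDerivAt, map_sum]
  exact HasFDerivAt.fun_sum fun i hi => (hw i hi).hasFDerivAt

theorem log (hu : HasGradientAt u u' x) (hux : u x ≠ 0) :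
    HasGradientAt (fun y => Real.log (u y)) ((u x)⁻¹ • u') x := by
  rw [hasGradientAt_iff_hasFDerivAt, map_smul]
  exact hu.hasFDerivAt.log hux

theorem log_div (hu : HasGradientAt u u' x) (hv : HasGradientAt v v' x)
    (hux : u x ≠ 0) (hvx : v x ≠ 0) :
    HasGradientAt (fun y => Real.log (u y / v y)) ((u x)⁻¹ • u' - (v x)⁻¹ • v') x := by
  refine ((hu.log hux).sub (hv.log hvx)).congr_of_eventuallyEq ?_
  filter_upwards [hu.continuousAt.eventually_ne hux, hv.continuousAt.eventually_ne hvx]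
    with y huy hvy
  exact Real.log_div huy hvy

end HasGradientAt

/-- **Gradient of the negative-dominant InfoNCE objective.** The objective replaces similarities
`s_a` with dissimilarities `1 - s_a` and places the negatives in the numerator; its gradient at
`p` amplifies the negative gradients by the factor `(Σ_{p' ∈ P} (1 - s_{p'}(p))) / (Σ_{n ∈ N} (1 - s_n(p)))`. -/
theorem gradient_negative_dominant_infoNCE
    {E : Type*} [NormedAddCommGroup E] [InnerProductSpace ℝ E] [CompleteSpace E]
    {ι : Type*} [DecidableEq ι] (P N : Finset ι) (hdisj : Disjoint P N) (hN : N.Nonempty)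
    (s : ι → E → ℝ) (g : ι → E) (p : E)
    (hgrad : ∀ a ∈ P ∪ N, HasGradientAt (s a) (g a) p)
    (hSN : 0 < ∑ n ∈ N, (1 - s n p))
    (hZ' : 0 < ∑ a ∈ P ∪ N, (1 - s a p)) :
    HasGradientAt
      (fun q : E => - Real.log
        ((1 / (N.card : ℝ)) * (∑ n ∈ N, (1 - s n q)) / (∑ a ∈ P ∪ N, (1 - s a q))))
      ((1 / ∑ a ∈ P ∪ N, (1 - s a p)) •
        (- (∑ p' ∈ P, g p')
          + ((∑ p' ∈ P, (1 - s p' p)) / (∑ n ∈ N, (1 - s n p))) • (∑ n ∈ N, g n)))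
      p := by
  have hc : 1 / (N.card : ℝ) ≠ 0 := by simpa using hN.card_pos.ne'
  have hdissim (a) (ha : a ∈ P ∪ N) : HasGradientAt (fun q => 1 - s a q) (-g a) p :=
    (hgrad a ha).const_sub 1
  have hnum := (HasGradientAt.fun_sum fun n hn => hdissim n (mem_union_right P hn)).const_mul
    (1 / (N.card : ℝ))
  have hden := HasGradientAt.fun_sum hdissim
  convert (hnum.log_div hden (mul_ne_zero hc hSN.ne') hZ'.ne').neg using 1
  simp only [sum_union hdisj, sum_neg_distrib] at hZ' ⊢
  match_scalars <;> field_simp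
  ring
end
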